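/- Let G be a connected simple graph on n vertices. For each pair u,v, let 𝒫_{uv} be the set of all shortest paths from u to v and assign nonnegative weights α_{uv}^{(q)} summing to 1 over q. Define for each edge k the extended score C_k(α) = (1/2) Σ_u Σ_v |P_{uv}| Σ_q φ_{uv}^{(q)}(k) α_{uv}^{(q)}. Then λ₂ ≥ n / C_max(α), where C_max(α) is the maximum of C_k(α) over edges. -/

import Mathlib

/-!
Take a unit eigenvector `x` of the Laplacian `L` for `λ₂`. Connectivity makes `λ₂ > 0`, so `x` is
orthogonal to the constant vector and `∑_{u,v} (x_u - x_v)² = 2n`. For each pair `u, v`, averaging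
Cauchy–Schwarz along the shortest paths with the weights `α` bounds `(x_u - x_v)²` by `|P_uv|`
times the `α`-weighted sum of squared edge differences on those paths. Summing over all pairs and
regrouping by edge gives `2n ≤ 2 ∑_k C_k(α) (x_a - x_b)² ≤ 2 C_max xᵀ L x = 2 C_max λ₂`.
-/

open SimpleGraph Finset

/-- The algebraic connectivity: the second smallest eigenvalue of the Laplacian matrix. -/
noncomputable def algebraicConnectivity {n : ℕ} (G : SimpleGraph (Fin n))
    [DecidableRel G.Adj] : ℝ :=
  if h : 1 < n then
    (((G.posSemidef_lapMatrix ℝ).1.eigenvalues) ∘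
      (Tuple.sort ((G.posSemidef_lapMatrix ℝ).1.eigenvalues))) ⟨1, h⟩
  else 0

/-- A fixed system of shortest paths, one for each (ordered) pair of vertices. -/
structure ShortestPathSystem {n : ℕ} (G : SimpleGraph (Fin n)) where
  path : ∀ u v : Fin n, G.Walk u v
  isPath : ∀ u v : Fin n, (path u v).IsPath
  length_eq : ∀ u v : Fin n, (path u v).length = G.dist u v

/-- The connection-graph-stability score of an edge `e`: half the double sum over ordered
pairs of vertices of the length of the chosen shortest path, if it passes through `e`. -/
noncomputable def cgsScore {n : ℕ} {G : SimpleGraph (Fin n)} (P : ShortestPathSystem G)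
    (e : Sym2 (Fin n)) : ℝ :=
  (1/2) * ∑ u : Fin n, ∑ v : Fin n,
    (if e ∈ (P.path u v).edges then ((P.path u v).length : ℝ) else 0)

/-- The squared difference of `x` across an edge. -/
noncomputable def edgeSq {V : Type*} (x : V → ℝ) : Sym2 V → ℝ :=
  Sym2.lift ⟨fun a b => (x a - x b)^2, fun a b => by ring_nf⟩

/-- A path weighting strategy: for each pair of vertices, the finite set of *all* shortest
paths between them, together with nonnegative weights summing to `1`. -/
structure PathWeighting {n : ℕ} (G : SimpleGraph (Fin n)) where
  paths : ∀ u v : Fin n, Finset (G.Walk u v)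
  mem_iff : ∀ (u v : Fin n) (p : G.Walk u v),
    p ∈ paths u v ↔ (p.IsPath ∧ p.length = G.dist u v)
  weight : ∀ u v : Fin n, G.Walk u v → ℝ
  weight_nonneg : ∀ (u v : Fin n) (p : G.Walk u v), 0 ≤ weight u v p
  weight_sum : ∀ u v : Fin n, u ≠ v → ∑ p ∈ paths u v, weight u v p = 1

/-- The extended connection-graph-stability score of an edge `e` under a path weighting
strategy: half the double sum over ordered pairs of the shortest-path length times the
total weight of the shortest paths through `e`. -/
noncomputable def extScore {n : ℕ} {G : SimpleGraph (Fin n)} (W : PathWeighting G)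
    (e : Sym2 (Fin n)) : ℝ :=
  (1/2) * ∑ u : Fin n, ∑ v : Fin n, (G.dist u v : ℝ) *
    ∑ p ∈ W.paths u v, (if e ∈ p.edges then W.weight u v p else 0)

open Matrix

lemma add_sq_le_of_sq_le_mul {a b L S : ℝ} (hL : 0 ≤ L) (hS : 0 ≤ S) (hb : b ^ 2 ≤ L * S) :
    (a + b) ^ 2 ≤ (L + 1) * (a ^ 2 + S) := by
  rcases hL.eq_or_lt with rfl | hpos
  · obtain rfl : b = 0 := pow_eq_zero_iff two_ne_zero |>.1 (by nlinarith)
    nlinarith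
  · nlinarith [sq_nonneg (L * a - b), mul_le_mul_of_nonneg_left hb hpos.le]

lemma Fintype.sum_sum_sub_sq {ι : Type*} [Fintype ι] (x : ι → ℝ) :
    ∑ u, ∑ v, (x u - x v) ^ 2 = 2 * (Fintype.card ι * ∑ u, x u ^ 2 - (∑ u, x u) ^ 2) := by
  simp only [sub_sq, sum_add_distrib, sum_sub_distrib, sum_const, card_univ, nsmul_eq_mul,
    ← mul_sum, ← sum_mul, sq (∑ u, x u)]
  ring

lemma Matrix.IsHermitian.eigenvectorBasis_dotProduct {ι : Type*} [Fintype ι] [DecidableEq ι]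
    {A : Matrix ι ι ℝ} (hA : A.IsHermitian) (i j : ι) :
    ⇑(hA.eigenvectorBasis i) ⬝ᵥ ⇑(hA.eigenvectorBasis j) = if i = j then 1 else 0 := by
  rw [← orthonormal_iff_ite.1 hA.eigenvectorBasis.orthonormal i j,
    EuclideanSpace.inner_eq_star_dotProduct, star_trivial, dotProduct_comm]

namespace SimpleGraph

variable {V : Type*}

@[simp]
lemma edgeSq_mk (x : V → ℝ) (a b : V) : edgeSq x s(a, b) = (x a - x b) ^ 2 := rfl

lemma edgeSq_nonneg (x : V → ℝ) (e : Sym2 V) : 0 ≤ edgeSq x e := by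
  induction e using Sym2.ind with
  | _ a b => exact sq_nonneg _

namespace Walk

variable {G : SimpleGraph V}

lemma sq_sub_le_length_mul_sum_edgeSq (x : V → ℝ) {u v : V} (p : G.Walk u v) :
    (x u - x v) ^ 2 ≤ p.length * (p.edges.map (edgeSq x)).sum := by
  induction p with
  | nil => simp
  | @cons u w v _ p ih =>
    have hS : 0 ≤ (p.edges.map (edgeSq x)).sum :=
      List.sum_nonneg (by simpa using fun e _ => edgeSq_nonneg x e)
    simpa [sub_add_sub_cancel] using
      add_sq_le_of_sq_le_mul (a := x u - x w) p.length.cast_nonneg hS ih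

lemma IsPath.sq_sub_le_length_mul_sum_edgeSq [Fintype V] [DecidableEq V] [DecidableRel G.Adj]
    (x : V → ℝ) {u v : V} {p : G.Walk u v} (hp : p.IsPath) :
    (x u - x v) ^ 2 ≤
      p.length * ∑ e ∈ G.edgeFinset, if e ∈ p.edges then edgeSq x e else 0 := by
  have hsupp : G.edgeFinset.filter (· ∈ p.edges) = p.edges.toFinset := by
    ext e
    simpa using fun h => p.edges_subset_edgeSet h
  rw [← sum_filter, hsupp, List.sum_toFinset _ hp.isTrail.edges_nodup]
  exact p.sq_sub_le_length_mul_sum_edgeSq x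

end Walk

variable [Fintype V] [DecidableEq V] (G : SimpleGraph V) [DecidableRel G.Adj]

lemma sum_dart_edge {M : Type*} [AddCommMonoid M] (f : Sym2 V → M) :
    ∑ d : G.Dart, f d.edge = 2 • ∑ e ∈ G.edgeFinset, f e := by
  rw [← sum_fiberwise_of_maps_to (g := Dart.edge) (t := G.edgeFinset)
    (fun d _ => mem_edgeFinset.2 d.edge_mem), smul_sum]
  refine sum_congr rfl fun e he => ?_
  rw [sum_congr rfl fun d hd => congrArg f (mem_filter.1 hd).2, sum_const,
    G.dart_edge_fiber_card e (mem_edgeFinset.1 he)]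

omit [DecidableEq V] in
lemma sum_sum_ite_adj_eq_sum_dart {M : Type*} [AddCommMonoid M] (f : V → V → M) :
    ∑ u, ∑ v, (if G.Adj u v then f u v else 0) = ∑ d : G.Dart, f d.fst d.snd := by
  rw [← Fintype.sum_prod_type' (f := fun u v => if G.Adj u v then f u v else 0), ← sum_filter]
  exact sum_bij' (fun p hp => ⟨p, (mem_filter.1 hp).2⟩) (fun d _ => d.toProd)
    (by simp) (by simp [Dart.adj]) (by simp) (by simp) (by simp)

lemma dotProduct_lapMatrix_mulVec (x : V → ℝ) :
    x ⬝ᵥ (G.lapMatrix ℝ *ᵥ x) = ∑ e ∈ G.edgeFinset, edgeSq x e := by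
  have h := G.lapMatrix_toLinearMap₂' ℝ x
  rw [toLinearMap₂'_apply', sum_sum_ite_adj_eq_sum_dart] at h
  rw [h, show ∑ d : G.Dart, (x d.fst - x d.snd) ^ 2 = ∑ d : G.Dart, edgeSq x d.edge from rfl,
    sum_dart_edge, nsmul_eq_mul]
  ring

lemma sum_eq_zero_of_lapMatrix_mulVec_eq_smul {x : V → ℝ} {μ : ℝ}
    (hx : G.lapMatrix ℝ *ᵥ x = μ • x) (hμ : μ ≠ 0) : ∑ i, x i = 0 := by
  have h : (fun _ => (1 : ℝ)) ⬝ᵥ (G.lapMatrix ℝ *ᵥ x) = 0 := by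
    rw [dotProduct_mulVec, ← mulVec_transpose, G.isSymm_lapMatrix (R := ℝ),
      lapMatrix_mulVec_const_eq_zero (R := ℝ), zero_dotProduct]
  simpa [hx, hμ, dotProduct, ← mul_sum] using h

lemma sq_dotProduct_eq_mul_of_lapMatrix_mulVec_eq_zero (hG : G.Connected) {x y : V → ℝ}
    (hx : G.lapMatrix ℝ *ᵥ x = 0) (hy : G.lapMatrix ℝ *ᵥ y = 0) :
    (x ⬝ᵥ y) ^ 2 = (x ⬝ᵥ x) * (y ⬝ᵥ y) := by
  have hxc := fun i j => (lapMatrix_mulVec_eq_zero_iff_forall_reachable G).1 hx i j (hG i j)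
  have hyc := fun i j => (lapMatrix_mulVec_eq_zero_iff_forall_reachable G).1 hy i j (hG i j)
  simp only [dotProduct, sq, sum_mul_sum]
  refine sum_congr rfl fun i _ => sum_congr rfl fun j _ => ?_
  rw [hxc j i, hyc i j]
  ring

end SimpleGraph

section algebraicConnectivity

variable {n : ℕ} {G : SimpleGraph (Fin n)} [DecidableRel G.Adj]

lemma algebraicConnectivity_eq_eigenvalues (hn : 1 < n) :
    algebraicConnectivity G = (G.posSemidef_lapMatrix ℝ).1.eigenvalues
      (Tuple.sort (G.posSemidef_lapMatrix ℝ).1.eigenvalues ⟨1, hn⟩) := by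
  rw [algebraicConnectivity, dif_pos hn]
  rfl

lemma exists_lapMatrix_mulVec_eq_algebraicConnectivity_smul (hn : 1 < n) :
    ∃ x : Fin n → ℝ, G.lapMatrix ℝ *ᵥ x = algebraicConnectivity G • x ∧ x ⬝ᵥ x = 1 := by
  have hA := (G.posSemidef_lapMatrix ℝ).1
  rw [algebraicConnectivity_eq_eigenvalues hn]
  exact ⟨_, hA.mulVec_eigenvectorBasis _, by simp [hA.eigenvectorBasis_dotProduct]⟩

lemma algebraicConnectivity_pos (hG : G.Connected) (hn : 1 < n) : 0 < algebraicConnectivity G := by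
  set hA := (G.posSemidef_lapMatrix ℝ).1
  rw [algebraicConnectivity_eq_eigenvalues hn]
  refine ((G.posSemidef_lapMatrix ℝ).eigenvalues_nonneg _).lt_of_ne' fun h1 => ?_
  -- Otherwise the two smallest eigenvalues vanish, and their orthonormal eigenvectors would be
  -- two constant vectors, for which Cauchy–Schwarz is an equality.
  have h0 : hA.eigenvalues (Tuple.sort hA.eigenvalues ⟨0, by omega⟩) = 0 :=
    le_antisymm (h1 ▸ Tuple.monotone_sort hA.eigenvalues (Fin.mk_le_mk.2 zero_le_one))
      ((G.posSemidef_lapMatrix ℝ).eigenvalues_nonneg _)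
  have hker : ∀ i, hA.eigenvalues i = 0 → G.lapMatrix ℝ *ᵥ ⇑(hA.eigenvectorBasis i) = 0 :=
    fun i hi => by rw [hA.mulVec_eigenvectorBasis, hi, zero_smul]
  simpa [hA.eigenvectorBasis_dotProduct] using
    G.sq_dotProduct_eq_mul_of_lapMatrix_mulVec_eq_zero hG (hker _ h0) (hker _ h1)

end algebraicConnectivity

namespace PathWeighting

variable {n : ℕ} {G : SimpleGraph (Fin n)} [DecidableRel G.Adj] (W : PathWeighting G)
  (x : Fin n → ℝ)

lemma sq_sub_le_sum_weight_mul (u v : Fin n) :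
    (x u - x v) ^ 2 ≤ ∑ p ∈ W.paths u v, W.weight u v p *
      (G.dist u v * ∑ e ∈ G.edgeFinset, if e ∈ p.edges then edgeSq x e else 0) := by
  obtain rfl | huv := eq_or_ne u v
  · simp
  calc (x u - x v) ^ 2 = ∑ p ∈ W.paths u v, W.weight u v p * (x u - x v) ^ 2 := by
        rw [← sum_mul, W.weight_sum u v huv, one_mul]
    _ ≤ _ := sum_le_sum fun p hp => by
        obtain ⟨hpath, hlen⟩ := (W.mem_iff u v p).1 hp
        exact mul_le_mul_of_nonneg_left (hlen ▸ hpath.sq_sub_le_length_mul_sum_edgeSq x)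
          (W.weight_nonneg u v p)

lemma sum_sum_sum_weight_mul_eq :
    ∑ u, ∑ v, ∑ p ∈ W.paths u v, W.weight u v p *
      (G.dist u v * ∑ e ∈ G.edgeFinset, if e ∈ p.edges then edgeSq x e else 0) =
    2 * ∑ e ∈ G.edgeFinset, extScore W e * edgeSq x e := by
  have hterm : ∀ e, 2 * (extScore W e * edgeSq x e) = ∑ u, ∑ v, ∑ p ∈ W.paths u v,
      W.weight u v p * (G.dist u v * if e ∈ p.edges then edgeSq x e else 0) := by
    intro e
    simp only [extScore, mul_sum, sum_mul]
    refine sum_congr rfl fun u _ => sum_congr rfl fun v _ => sum_congr rfl fun p _ => ?_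
    split_ifs <;> ring
  rw [mul_sum G.edgeFinset _ (2 : ℝ)]
  simp only [hterm]
  symm
  rw [sum_comm]
  refine sum_congr rfl fun u _ => ?_
  rw [sum_comm]
  refine sum_congr rfl fun v _ => ?_
  rw [sum_comm]
  simp only [mul_sum]

lemma sum_sum_sq_sub_le_two_mul_dotProduct_lapMatrix_mulVec {C : ℝ}
    (hC : ∀ e ∈ G.edgeSet, extScore W e ≤ C) :
    ∑ u, ∑ v, (x u - x v) ^ 2 ≤ 2 * C * (x ⬝ᵥ (G.lapMatrix ℝ *ᵥ x)) :=
  calc ∑ u, ∑ v, (x u - x v) ^ 2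
      ≤ ∑ u, ∑ v, ∑ p ∈ W.paths u v, W.weight u v p *
          (G.dist u v * ∑ e ∈ G.edgeFinset, if e ∈ p.edges then edgeSq x e else 0) :=
        sum_le_sum fun u _ => sum_le_sum fun v _ => W.sq_sub_le_sum_weight_mul x u v
    _ = 2 * ∑ e ∈ G.edgeFinset, extScore W e * edgeSq x e := W.sum_sum_sum_weight_mul_eq x
    _ ≤ 2 * ∑ e ∈ G.edgeFinset, C * edgeSq x e := by
        gcongr with e he
        · exact edgeSq_nonneg x e
        · exact hC e (mem_edgeFinset.1 he)
    _ = 2 * C * (x ⬝ᵥ (G.lapMatrix ℝ *ᵥ x)) := by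
        rw [G.dotProduct_lapMatrix_mulVec, ← mul_sum, mul_assoc]

end PathWeighting

/-- The extended connection-graph-stability lower bound: for any path weighting strategy
`α`, `λ₂ ≥ n / C_max(α)`. -/
theorem algebraicConnectivity_ge_div_extScore_max {n : ℕ} (G : SimpleGraph (Fin n))
    [DecidableRel G.Adj] (hG : G.Connected) (hn : 2 ≤ n)
    (W : PathWeighting G) (Cmax : ℝ)
    (hC : IsGreatest (extScore W '' G.edgeSet) Cmax) :
    (n : ℝ) / Cmax ≤ algebraicConnectivity G := by
  obtain ⟨x, hx, hxx⟩ := exists_lapMatrix_mulVec_eq_algebraicConnectivity_smul (G := G) hn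
  have hpos := algebraicConnectivity_pos hG hn
  have hsum := G.sum_eq_zero_of_lapMatrix_mulVec_eq_smul hx hpos.ne'
  have key := W.sum_sum_sq_sub_le_two_mul_dotProduct_lapMatrix_mulVec x
    fun e he => hC.2 ⟨e, he, rfl⟩
  have hsq : ∑ i, x i ^ 2 = 1 := by simpa only [dotProduct, sq] using hxx
  rw [Fintype.sum_sum_sub_sq, hsq, hsum, hx, dotProduct_smul, hxx, smul_eq_mul] at key
  norm_num at key
  have hbound : (n : ℝ) ≤ Cmax * algebraicConnectivity G := by linarith
  have hCpos : 0 < Cmax :=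
    pos_of_mul_pos_left ((by positivity : (0 : ℝ) < n).trans_le hbound) hpos.le
  rwa [div_le_iff₀ hCpos, mul_comm]
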